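/- If C ⊆ Φ⁺ contains all three simple roots (Δ ⊆ C) and has the property that C ∩ Φ' is closed in Φ'⁺ for every rank-2 parabolic subsystem Φ', then C = Φ⁺. Equivalently, the parabolic 2-closure of Δ is Φ⁺. -/

import Mathlib

open scoped NNReal

noncomputable section

/-- The ambient vector space `V = ℝ³`. -/
abbrev V : Type := Fin 3 → ℝ

/-- The symmetric bilinear form with `⟨αᵢ,αⱼ⟩ = 1` if `i = j` and `-1` otherwise. -/
def B (x y : V) : ℝ := 2 * (∑ i, x i * y i) - (∑ i, x i) * (∑ i, y i)

/-- The associated quadratic form. -/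
def Q (x : V) : ℝ := B x x

/-- The simple roots `α₁, α₂, α₃` (the standard basis vectors). -/
def α (i : Fin 3) : V := Pi.single i 1

/-- The set of simple roots. -/
def Δ : Set V := Set.range α

/-- `f` is the reflection `r_{αᵢ} : x ↦ x - 2⟨αᵢ,x⟩αᵢ` for some `i` (note `⟨αᵢ,αᵢ⟩ = 1`). -/
def IsSimpleReflection (f : V ≃ₗ[ℝ] V) : Prop :=
  ∃ i : Fin 3, ∀ x : V, f x = x - (2 * B (α i) x) • α i

/-- The group `W ≤ GL(V)` generated by the three simple reflections:
the standard reflection representation of `U₃`. -/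
def W : Subgroup (V ≃ₗ[ℝ] V) := Subgroup.closure {f | IsSimpleReflection f}

/-- The root system `Φ = {w·αᵢ : w ∈ W, i ∈ {1,2,3}}`. -/
def Φ : Set V := {x | ∃ w ∈ W, ∃ i : Fin 3, x = w (α i)}

/-- `Span_{≥0}(X)`: the set of nonnegative linear combinations of elements of `X`. -/
def nnspan (X : Set V) : Set V := (Submodule.span ℝ≥0 X : Set V)

/-- The positive roots `Φ⁺ = Φ ∩ Span_{≥0}(Δ)`. -/
def Φpos : Set V := Φ ∩ nnspan Δ

/-- `R ⊆ Φ⁺` is closed if for all `a, b ∈ R`, `Span_{≥0}{a,b} ∩ Φ⁺ ⊆ R`. -/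
def IsClosedSet (R : Set V) : Prop := ∀ a ∈ R, ∀ b ∈ R, nnspan {a, b} ∩ Φpos ⊆ R

/-- `R` is a biclosed subset of `Φ⁺`. -/
def IsBiclosed (R : Set V) : Prop := R ⊆ Φpos ∧ IsClosedSet R ∧ IsClosedSet (Φpos \ R)

/-- A rank-2 parabolic subsystem `w·(Span{αᵢ,αⱼ} ∩ Φ)`. -/
def IsRank2Parabolic (P : Set V) : Prop :=
  ∃ w ∈ W, ∃ i j : Fin 3, i ≠ j ∧
    P = (fun x => w x) '' ((Submodule.span ℝ {α i, α j} : Set V) ∩ Φ)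

/-- `R'` is closed in the set of positive roots `Φ'pos` of a subsystem. -/
def IsClosedIn (Φ'pos R' : Set V) : Prop := ∀ a ∈ R', ∀ b ∈ R', nnspan {a, b} ∩ Φ'pos ⊆ R'

/-- `R'` is biclosed in the set of positive roots `Φ'pos` of a subsystem. -/
def IsBiclosedIn (Φ'pos R' : Set V) : Prop :=
  R' ⊆ Φ'pos ∧ IsClosedIn Φ'pos R' ∧ IsClosedIn Φ'pos (Φ'pos \ R')

/-- `R ⊆ Φ⁺` is parabolic biclosed if its intersection with every rank-2 parabolic
subsystem `Φ'` is biclosed in `Φ'⁺`. -/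
def IsParabolicBiclosed (R : Set V) : Prop :=
  R ⊆ Φpos ∧ ∀ P, IsRank2Parabolic P → IsBiclosedIn (P ∩ Φpos) (R ∩ P)

/-!
Positive roots are ordered by height. A non-simple positive root `β` pairs positively with some
simple root `αᵢ` (because `⟨β, β⟩ = 1`), and `rᵢ β` is a positive root of smaller height. Induction
on the height then writes `β = w((m+1)αₐ + m α_b)` with `m ≥ 1` and `wαₐ, wα_b` positive roots.
These two roots are lower than `β`, hence in `C` by a second induction on the height, and `β` is a
nonnegative combination of them inside the rank-2 parabolic subsystem `w·(Span{αₐ, α_b} ∩ Φ)`, so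
it lies in `C` by closedness.

That `rᵢ` maps `Φ⁺ \ {αᵢ}` into `Φ⁺` comes from integrality: an integer vector with a positive and
a negative coordinate has `⟨x, x⟩ ≥ 4`, so no root has coordinates of both signs.
-/

def ht (x : V) : ℝ := x 0 + x 1 + x 2

lemma ht_add (x y : V) : ht (x + y) = ht x + ht y := by
  simp only [ht, Pi.add_apply]; ring

lemma ht_smul (r : ℝ) (x : V) : ht (r • x) = r * ht x := by
  simp only [ht, Pi.smul_apply, smul_eq_mul]; ring

lemma α_apply (i k : Fin 3) : α i k = if k = i then 1 else 0 := Pi.single_apply i 1 k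

lemma ht_α (i : Fin 3) : ht (α i) = 1 := by
  fin_cases i <;> simp [ht, α_apply]

lemma B_apply (x y : V) :
    B x y = 2 * (x 0 * y 0 + x 1 * y 1 + x 2 * y 2) - (x 0 + x 1 + x 2) * (y 0 + y 1 + y 2) := by
  simp [B, Fin.sum_univ_three]

lemma B_comm (x y : V) : B x y = B y x := by
  rw [B_apply, B_apply]; ring

lemma B_add_right (x y z : V) : B x (y + z) = B x y + B x z := by
  simp only [B_apply, Pi.add_apply]; ring

lemma B_smul_right (r : ℝ) (x y : V) : B x (r • y) = r * B x y := by
  simp only [B_apply, Pi.smul_apply, smul_eq_mul]; ring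

lemma B_α_left (i : Fin 3) (x : V) : B (α i) x = 2 * x i - ht x := by
  fin_cases i <;> simp [B_apply, α_apply, ht]

lemma B_α_self (i : Fin 3) : B (α i) (α i) = 1 := by
  rw [B_α_left, ht_α, α_apply, if_pos rfl]; norm_num

lemma B_α_α_of_ne {i j : Fin 3} (h : i ≠ j) : B (α i) (α j) = -1 := by
  rw [B_α_left, ht_α, α_apply, if_neg h]; norm_num

lemma Q_apply (x : V) :
    Q x = x 0 ^ 2 + x 1 ^ 2 + x 2 ^ 2 - 2 * x 0 * x 1 - 2 * x 0 * x 2 - 2 * x 1 * x 2 := by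
  rw [Q, B_apply]; ring

lemma Q_eq_sum (x : V) : Q x = x 0 * B (α 0) x + x 1 * B (α 1) x + x 2 * B (α 2) x := by
  simp only [Q_apply, B_α_left, ht]; ring

def simpleReflection (i : Fin 3) : V ≃ₗ[ℝ] V :=
  LinearEquiv.ofInvolutive
    { toFun := fun x => x - (2 * B (α i) x) • α i
      map_add' := fun x y => by rw [B_add_right]; module
      map_smul' := fun r x => by rw [B_smul_right]; simp only [RingHom.id_apply]; module }
    (fun x => by
      simp only [LinearMap.coe_mk, AddHom.coe_mk, sub_eq_add_neg, B_add_right, ← neg_smul,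
        B_smul_right, B_α_self]
      module)

lemma simpleReflection_apply (i : Fin 3) (x : V) :
    simpleReflection i x = x - (2 * B (α i) x) • α i := rfl

lemma simpleReflection_mem_W (i : Fin 3) : simpleReflection i ∈ W :=
  Subgroup.subset_closure ⟨i, fun _ => rfl⟩

lemma simpleReflection_mul_self (i : Fin 3) : simpleReflection i * simpleReflection i = 1 :=
  LinearEquiv.ext (simpleReflection i).apply_symm_apply

theorem W_induction {p : (w : V ≃ₗ[ℝ] V) → w ∈ W → Prop} (one : p 1 (one_mem W))
    (mul : ∀ i w hw, p w hw → p (simpleReflection i * w) (mul_mem (simpleReflection_mem_W i) hw))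
    {w : V ≃ₗ[ℝ] V} (hw : w ∈ W) : p w hw := by
  have eq_of_isSimpleReflection : ∀ f, IsSimpleReflection f → ∃ i, f = simpleReflection i :=
    fun f ⟨i, hf⟩ => ⟨i, LinearEquiv.ext hf⟩
  induction hw using Subgroup.closure_induction_left with
  | one => exact one
  | mul_left f hf w hw ih =>
    obtain ⟨i, rfl⟩ := eq_of_isSimpleReflection f hf
    exact mul i w hw ih
  | inv_mul_cancel f hf w hw ih =>
    obtain ⟨i, rfl⟩ := eq_of_isSimpleReflection f hf
    simp only [inv_eq_of_mul_eq_one_right (simpleReflection_mul_self i)]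
    exact mul i w hw ih

lemma B_simpleReflection (i : Fin 3) (x y : V) :
    B (simpleReflection i x) (simpleReflection i y) = B x y := by
  simp only [simpleReflection_apply, B_α_left]
  fin_cases i <;> simp [B_apply, α_apply, ht] <;> ring

lemma B_map_of_mem_W {w : V ≃ₗ[ℝ] V} (hw : w ∈ W) (x y : V) : B (w x) (w y) = B x y := by
  induction hw using W_induction generalizing x y with
  | one => rfl
  | mul i w _ ih => exact (B_simpleReflection i (w x) (w y)).trans (ih x y)

lemma B_map_α_map_α_of_ne {w : V ≃ₗ[ℝ] V} (hw : w ∈ W) {a b : Fin 3} (hab : a ≠ b) :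
    B (w (α a)) (w (α b)) = -1 := by
  rw [B_map_of_mem_W hw, B_α_α_of_ne hab]

lemma α_mem_Φ (i : Fin 3) : α i ∈ Φ := ⟨1, one_mem W, i, rfl⟩

lemma map_mem_Φ {w : V ≃ₗ[ℝ] V} (hw : w ∈ W) {x : V} (hx : x ∈ Φ) : w x ∈ Φ := by
  obtain ⟨u, hu, i, rfl⟩ := hx
  exact ⟨w * u, mul_mem hw hu, i, rfl⟩

lemma Q_of_mem_Φ {x : V} (hx : x ∈ Φ) : Q x = 1 := by
  obtain ⟨w, hw, i, rfl⟩ := hx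
  rw [Q, B_map_of_mem_W hw, B_α_self]

def IsIntVector (x : V) : Prop := ∀ k, ∃ m : ℤ, x k = m

lemma IsIntVector.exists_ht_eq {x : V} (hx : IsIntVector x) : ∃ m : ℤ, ht x = m := by
  obtain ⟨a, ha⟩ := hx 0
  obtain ⟨b, hb⟩ := hx 1
  obtain ⟨c, hc⟩ := hx 2
  exact ⟨a + b + c, by rw [ht, ha, hb, hc]; push_cast; rfl⟩

lemma IsIntVector.simpleReflection {x : V} (hx : IsIntVector x) (i : Fin 3) :
    IsIntVector (simpleReflection i x) := by
  intro k
  obtain ⟨a, ha⟩ := hx k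
  obtain ⟨b, hb⟩ := hx i
  obtain ⟨c, hc⟩ := hx.exists_ht_eq
  refine ⟨a - 2 * (2 * b - c) * if k = i then 1 else 0, ?_⟩
  rw [simpleReflection_apply, Pi.sub_apply, Pi.smul_apply, smul_eq_mul, B_α_left, α_apply, ha,
    hb, hc]
  push_cast; rfl

lemma isIntVector_of_mem_Φ {x : V} (hx : x ∈ Φ) : IsIntVector x := by
  obtain ⟨w, hw, j, rfl⟩ := hx
  induction hw using W_induction with
  | one => intro k; exact ⟨if k = j then 1 else 0, by simp [α_apply]⟩
  | mul i w _ ih => exact ih.simpleReflection i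

lemma IsIntVector.one_le_of_pos {x : V} (hx : IsIntVector x) {k : Fin 3} (hk : 0 < x k) :
    1 ≤ x k := by
  obtain ⟨m, hm⟩ := hx k
  rw [hm] at hk ⊢
  exact_mod_cast (Int.cast_pos.mp hk : 0 < m)

lemma IsIntVector.le_neg_one_of_neg {x : V} (hx : IsIntVector x) {k : Fin 3} (hk : x k < 0) :
    x k ≤ -1 := by
  obtain ⟨m, hm⟩ := hx k
  rw [hm] at hk ⊢
  have : m < 0 := Int.cast_lt_zero.mp hk
  exact_mod_cast (by omega : m ≤ -1)

lemma nonneg_of_mem_Φ_of_pos {x : V} (hx : x ∈ Φ) {k : Fin 3} (hk : 0 < x k) (j : Fin 3) :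
    0 ≤ x j := by
  by_contra! hj
  have hk1 := (isIntVector_of_mem_Φ hx).one_le_of_pos hk
  have hj1 := (isIntVector_of_mem_Φ hx).le_neg_one_of_neg hj
  have hjk : x j * x k ≤ -1 := by nlinarith
  have hQ := Q_of_mem_Φ hx
  rw [Q_apply] at hQ
  -- `Q x = (x l - x j - x k) ^ 2 - 4 x j x k ≥ 4`, where `l` is the third index
  fin_cases j <;> fin_cases k <;> simp at hj hk hjk <;>
    nlinarith [sq_nonneg (x 0 - x 1 - x 2), sq_nonneg (x 1 - x 0 - x 2),
      sq_nonneg (x 2 - x 0 - x 1)]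

lemma mem_nnspan_Δ_iff {x : V} : x ∈ nnspan Δ ↔ ∀ k, 0 ≤ x k := by
  constructor
  · intro hx
    induction hx using Submodule.span_induction with
    | mem y hy => obtain ⟨i, rfl⟩ := hy; intro k; rw [α_apply]; split_ifs <;> norm_num
    | zero => intro k; rfl
    | add y z _ _ hy hz => intro k; exact add_nonneg (hy k) (hz k)
    | smul c y _ hy => intro k; exact mul_nonneg c.2 (hy k)
  · intro hx
    rw [← Finset.univ_sum_single x]
    refine Submodule.sum_mem _ fun k _ => ?_
    have : Pi.single k (x k) = (⟨x k, hx k⟩ : ℝ≥0) • α k := by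
      simp [α, ← Pi.single_smul]
    rw [this]
    exact Submodule.smul_mem _ _ (Submodule.subset_span ⟨k, rfl⟩)

lemma α_mem_Φpos (i : Fin 3) : α i ∈ Φpos :=
  ⟨α_mem_Φ i, mem_nnspan_Δ_iff.mpr fun k => by rw [α_apply]; split_ifs <;> norm_num⟩

lemma eq_α_of_mem_Φpos {x : V} (hx : x ∈ Φpos) {i : Fin 3} (h : ∀ k, k ≠ i → x k = 0) :
    x = α i := by
  have hxα : x = x i • α i := by
    funext k
    rw [Pi.smul_apply, α_apply]
    split_ifs with hk
    · rw [hk, smul_eq_mul, mul_one]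
    · rw [h k hk, smul_zero]
  have hQ := Q_of_mem_Φ hx.1
  rw [Q, hxα, B_smul_right, B_comm, B_smul_right, B_α_self] at hQ
  have hxi : 0 ≤ x i := mem_nnspan_Δ_iff.mp hx.2 i
  rw [hxα, show x i = 1 by nlinarith, one_smul]

lemma simpleReflection_mem_Φpos {x : V} (hx : x ∈ Φpos) {i : Fin 3} (hne : x ≠ α i) :
    simpleReflection i x ∈ Φpos := by
  have hΦ : simpleReflection i x ∈ Φ := map_mem_Φ (simpleReflection_mem_W i) hx.1
  obtain ⟨k, hki, hk⟩ : ∃ k, k ≠ i ∧ 0 < x k := by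
    by_contra! h
    exact hne (eq_α_of_mem_Φpos hx fun k hk =>
      le_antisymm (h k hk) (mem_nnspan_Δ_iff.mp hx.2 k))
  have hk' : 0 < simpleReflection i x k := by
    simpa [simpleReflection_apply, α_apply, hki] using hk
  exact ⟨hΦ, mem_nnspan_Δ_iff.mpr (nonneg_of_mem_Φ_of_pos hΦ hk')⟩

lemma ht_pos_of_mem_Φpos {x : V} (hx : x ∈ Φpos) : 0 < ht x := by
  have hnonneg := mem_nnspan_Δ_iff.mp hx.2
  have hQ := Q_of_mem_Φ hx.1
  rw [Q_apply] at hQ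
  by_contra! h
  rw [ht] at h
  have h0 : x 0 = 0 := by linarith [hnonneg 0, hnonneg 1, hnonneg 2]
  have h1 : x 1 = 0 := by linarith [hnonneg 0, hnonneg 1, hnonneg 2]
  have h2 : x 2 = 0 := by linarith [hnonneg 0, hnonneg 1, hnonneg 2]
  simp [h0, h1, h2] at hQ

lemma exists_nat_ht {x : V} (hx : x ∈ Φpos) : ∃ n : ℕ, ht x = n := by
  obtain ⟨m, hm⟩ := (isIntVector_of_mem_Φ hx.1).exists_ht_eq
  have hm0 : 0 ≤ m := by
    have := ht_pos_of_mem_Φpos hx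
    rw [hm] at this
    exact_mod_cast this.le
  exact ⟨m.toNat, by rw [hm, ← Int.cast_natCast, Int.toNat_of_nonneg hm0]⟩

theorem Φpos_induction {p : (x : V) → x ∈ Φpos → Prop}
    (ind : ∀ x hx, (∀ y hy, ht y < ht x → p y hy) → p x hx) {x : V} (hx : x ∈ Φpos) :
    p x hx := by
  obtain ⟨n, hn⟩ := exists_nat_ht hx
  induction n using Nat.strong_induction_on generalizing x with
  | _ n ih =>
    refine ind x hx fun y hy hlt => ?_
    obtain ⟨k, hk⟩ := exists_nat_ht hy
    exact ih k (by rw [hk, hn] at hlt; exact_mod_cast hlt) hy hk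

lemma exists_B_α_pos {x : V} (hx : x ∈ Φpos) : ∃ i, 0 < B (α i) x := by
  have hnonneg := mem_nnspan_Δ_iff.mp hx.2
  have hQ := Q_of_mem_Φ hx.1
  rw [Q_eq_sum] at hQ
  by_contra! h
  nlinarith [mul_nonpos_of_nonneg_of_nonpos (hnonneg 0) (h 0),
    mul_nonpos_of_nonneg_of_nonpos (hnonneg 1) (h 1),
    mul_nonpos_of_nonneg_of_nonpos (hnonneg 2) (h 2)]

lemma dihedral_root_mem_Φ (n : ℕ) {i j : Fin 3} (hij : i ≠ j) :
    ((n : ℝ) + 1) • α i + (n : ℝ) • α j ∈ Φ := by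
  induction n generalizing i j with
  | zero => simpa using α_mem_Φ i
  | succ n ih =>
    have hB : B (α i) (((n : ℝ) + 1) • α j + (n : ℝ) • α i) = -1 := by
      rw [B_add_right, B_smul_right, B_smul_right, B_α_α_of_ne hij, B_α_self]; ring
    have h := map_mem_Φ (simpleReflection_mem_W i) (ih hij.symm)
    rw [simpleReflection_apply, hB] at h
    convert h using 1
    push_cast; module

def HasDihedralForm (β : V) : Prop :=
  ∃ w ∈ W, ∃ a b : Fin 3, a ≠ b ∧ w (α a) ∈ Φpos ∧ w (α b) ∈ Φpos ∧
    ∃ m : ℕ, 0 < m ∧ β = w (((m : ℝ) + 1) • α a + (m : ℝ) • α b)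

lemma hasDihedralForm_simpleReflection_α {i j : Fin 3} (hij : i ≠ j) :
    HasDihedralForm (simpleReflection i (α j)) := by
  refine ⟨1, one_mem W, i, j, hij, α_mem_Φpos i, α_mem_Φpos j, 1, one_pos, ?_⟩
  rw [simpleReflection_apply, B_α_α_of_ne hij, LinearEquiv.coe_one, id]
  push_cast; module

lemma HasDihedralForm.map_simpleReflection {γ : V} (h : HasDihedralForm γ) {i : Fin 3}
    (hneg : B (α i) γ < 0) : HasDihedralForm (simpleReflection i γ) := by
  obtain ⟨w, hw, a, b, hab, ha, hb, m, hm, rfl⟩ := h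
  have hBab := B_map_α_map_α_of_ne hw hab
  have hγ : w (((m : ℝ) + 1) • α a + (m : ℝ) • α b) =
      ((m : ℝ) + 1) • w (α a) + (m : ℝ) • w (α b) := by
    rw [map_add, map_smul, map_smul]
  rw [hγ, B_add_right, B_smul_right, B_smul_right] at hneg
  by_cases hb_i : w (α b) = α i
  · -- `⟨αᵢ, γ⟩ = -1`, so `rᵢ γ = γ + 2 w α_b` has the same form with `a` and `b` swapped
    have hBa : B (α i) (w (α a)) = -1 := by rw [← hb_i, B_comm, hBab]
    have hBb : B (α i) (w (α b)) = 1 := by rw [hb_i, B_α_self]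
    refine ⟨w, hw, b, a, hab.symm, hb, ha, m + 1, m.succ_pos, ?_⟩
    rw [simpleReflection_apply, hγ, B_add_right, B_smul_right, B_smul_right, hBa, hBb, ← hb_i,
      map_add, map_smul, map_smul]
    push_cast; module
  by_cases ha_i : w (α a) = α i
  · rw [ha_i, B_α_self, ← ha_i, hBab] at hneg
    linarith
  exact ⟨simpleReflection i * w, mul_mem (simpleReflection_mem_W i) hw, a, b, hab,
    simpleReflection_mem_Φpos ha ha_i, simpleReflection_mem_Φpos hb hb_i, m, hm, rfl⟩

theorem hasDihedralForm_of_mem_Φpos {β : V} (hβ : β ∈ Φpos) (hβΔ : β ∉ Δ) :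
    HasDihedralForm β := by
  induction hβ using Φpos_induction with
  | ind β hβ ih =>
    obtain ⟨i, hi⟩ := exists_B_α_pos hβ
    have hγ : simpleReflection i β ∈ Φpos :=
      simpleReflection_mem_Φpos hβ fun h => hβΔ ⟨i, h.symm⟩
    have hβγ : β = simpleReflection i (simpleReflection i β) :=
      ((simpleReflection i).apply_symm_apply β).symm
    have hneg : B (α i) (simpleReflection i β) < 0 := by
      rw [simpleReflection_apply, sub_eq_add_neg, B_add_right, ← neg_smul, B_smul_right,
        B_α_self]
      linarith
    rw [hβγ]
    by_cases hγΔ : simpleReflection i β ∈ Δ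
    · obtain ⟨j, hj⟩ := hγΔ
      rw [← hj] at hneg ⊢
      refine hasDihedralForm_simpleReflection_α fun hij => ?_
      rw [hij, B_α_self] at hneg
      linarith
    · refine (ih _ hγ ?_ hγΔ).map_simpleReflection hneg
      rw [simpleReflection_apply, sub_eq_add_neg, ← neg_smul, ht_add, ht_smul, ht_α]
      linarith

lemma add_smul_mem_nnspan_pair {a b : ℝ} (ha : 0 ≤ a) (hb : 0 ≤ b) (x y : V) :
    a • x + b • y ∈ nnspan {x, y} := by
  have hx : (⟨a, ha⟩ : ℝ≥0) • x ∈ nnspan {x, y} :=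
    Submodule.smul_mem _ _ (Submodule.subset_span (Set.mem_insert x {y}))
  have hy : (⟨b, hb⟩ : ℝ≥0) • y ∈ nnspan {x, y} :=
    Submodule.smul_mem _ _ (Submodule.subset_span (Set.mem_insert_of_mem x rfl))
  exact Submodule.add_mem _ hx hy

lemma map_dihedral_root_mem_of_isClosedIn {C : Set V}
    (hclosed : ∀ P : Set V, IsRank2Parabolic P → IsClosedIn (P ∩ Φpos) (C ∩ P))
    {w : V ≃ₗ[ℝ] V} (hw : w ∈ W) {a b : Fin 3} (hab : a ≠ b) (ha : w (α a) ∈ C)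
    (hb : w (α b) ∈ C) (m : ℕ) (hpos : w (((m : ℝ) + 1) • α a + (m : ℝ) • α b) ∈ Φpos) :
    w (((m : ℝ) + 1) • α a + (m : ℝ) • α b) ∈ C := by
  let P : Set V := (fun x => w x) '' ((Submodule.span ℝ {α a, α b} : Set V) ∩ Φ)
  have mem_P {x : V} (hx : x ∈ Submodule.span ℝ {α a, α b}) (hxΦ : x ∈ Φ) : w x ∈ P :=
    ⟨x, ⟨hx, hxΦ⟩, rfl⟩
  have hαa : α a ∈ Submodule.span ℝ {α a, α b} := Submodule.subset_span (by simp)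
  have hαb : α b ∈ Submodule.span ℝ {α a, α b} := Submodule.subset_span (by simp)
  have hspan : w (((m : ℝ) + 1) • α a + (m : ℝ) • α b) ∈ nnspan {w (α a), w (α b)} := by
    rw [map_add, map_smul, map_smul]
    exact add_smul_mem_nnspan_pair (by positivity) (by positivity) _ _
  refine (hclosed P ⟨w, hw, a, b, hab, rfl⟩ _ ⟨ha, mem_P hαa (α_mem_Φ a)⟩ _
    ⟨hb, mem_P hαb (α_mem_Φ b)⟩ ⟨hspan, ?_, hpos⟩).1
  exact mem_P (Submodule.add_mem _ (Submodule.smul_mem _ _ hαa) (Submodule.smul_mem _ _ hαb))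
    (dihedral_root_mem_Φ m hab)

theorem Φpos_subset_of_isClosedIn_parabolic (C : Set V) (hΔ : Δ ⊆ C)
    (hclosed : ∀ P : Set V, IsRank2Parabolic P → IsClosedIn (P ∩ Φpos) (C ∩ P)) :
    Φpos ⊆ C := by
  intro β hβ
  induction hβ using Φpos_induction with
  | ind β hβ ih =>
    by_cases hβΔ : β ∈ Δ
    · exact hΔ hβΔ
    obtain ⟨w, hw, a, b, hab, ha, hb, m, hm, rfl⟩ := hasDihedralForm_of_mem_Φpos hβ hβΔ
    have hm1 : (1 : ℝ) ≤ m := by exact_mod_cast hm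
    have hht : ht (w (((m : ℝ) + 1) • α a + (m : ℝ) • α b)) =
        ((m : ℝ) + 1) * ht (w (α a)) + m * ht (w (α b)) := by
      rw [map_add, map_smul, map_smul, ht_add, ht_smul, ht_smul]
    have hpa := ht_pos_of_mem_Φpos ha
    have hpb := ht_pos_of_mem_Φpos hb
    exact map_dihedral_root_mem_of_isClosedIn hclosed hw hab (ih _ ha (by nlinarith))
      (ih _ hb (by nlinarith)) m hβ

/-- If `C ⊆ Φ⁺` contains all three simple roots and `C ∩ Φ'` is closed in `Φ'⁺` for
every rank-2 parabolic subsystem `Φ'`, then `C = Φ⁺`: the parabolic 2-closure of `Δ`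
is all of `Φ⁺`. -/
theorem parabolic_closure_of_simples (C : Set V) (hC : C ⊆ Φpos) (hΔ : Δ ⊆ C)
    (hclosed : ∀ P : Set V, IsRank2Parabolic P → IsClosedIn (P ∩ Φpos) (C ∩ P)) :
    C = Φpos :=
  hC.antisymm (Φpos_subset_of_isClosedIn_parabolic C hΔ hclosed)
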